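/- arXiv:1706.01026 — 5 statements merged into one kernel-verified Lean document; each statement's English description precedes it below -/
import Mathlib

section
/- Let M > a₁ ≥ a₂ ≥ … ≥ aₙ ≥ 1 be real numbers. Then ∑_{i=1}^{n} aᵢ · log(n/i) ≤ C · ⌈log M⌉ · ∑_{i=1}^{n} aᵢ for some universal constant C. -/
/-!
Write `log (n/i) = log M + log (n/(M i))`. The first part contributes at most `log M ∑ aᵢ`;
in the second only the positive part matters, and there `aᵢ < M` can be traded for `M`. What is
left is `M ∑ᵢ log⁺ (x/i)` with `x = n/M`, and `∑ᵢ log⁺ (x/i) ≤ x` because the nonzero terms sum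
to `log (x^k / k!) ≤ log eˣ`. Hence the bound holds with `C = 2`, using `n ≤ ∑ aᵢ`.
-/

open Finset Real

lemma sum_range_log_div_succ_le {x : ℝ} (hx : 0 < x) (k : ℕ) :
    ∑ i ∈ range k, log (x / (i + 1)) ≤ x := by
  have hprod : ∏ i ∈ range k, (x / (i + 1)) = x ^ k / k.factorial := by
    rw [prod_div_distrib, prod_const, card_range, ← prod_range_add_one_eq_factorial]
    push_cast
    rfl
  calc ∑ i ∈ range k, log (x / (i + 1))
      = log (x ^ k / k.factorial) := by
        rw [← log_prod fun i _ => by positivity, hprod]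
    _ ≤ log (exp x) := log_le_log (by positivity) (pow_div_factorial_le_exp x hx.le k)
    _ = x := log_exp x

lemma sum_range_posLog_div_succ_le {x : ℝ} (hx : 0 < x) (n : ℕ) :
    ∑ i ∈ range n, log⁺ (x / (i + 1)) ≤ x := by
  set m := min n ⌊x⌋₊
  have hsmall : ∀ i ∈ range n, i ∉ range m → log⁺ (x / (i + 1)) = 0 := by
    intro i hin him
    simp only [m, mem_range, lt_min_iff, not_and_or, not_lt] at hin him
    have hxi : x < i + 1 := by
      exact_mod_cast (Nat.floor_lt hx.le).1 (Nat.lt_succ_of_le (him.resolve_left hin.not_ge))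
    rw [posLog_eq_zero_iff, abs_of_pos (by positivity)]
    exact (div_le_one (by positivity)).2 hxi.le
  have hlarge : ∀ i ∈ range m, log⁺ (x / (i + 1)) = log (x / (i + 1)) := by
    intro i him
    have hix : (i : ℝ) + 1 ≤ x := by
      exact_mod_cast (Nat.le_floor_iff hx.le).1 ((mem_range.1 him).trans_le (min_le_right _ _))
    rw [posLog_eq_log (by rw [abs_of_pos (by positivity)]; exact (one_le_div (by positivity)).2 hix)]
  rw [← sum_subset (range_subset_range.2 (min_le_left _ _)) hsmall, sum_congr rfl hlarge]
  exact sum_range_log_div_succ_le hx m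

lemma mul_log_le_mul_log_add_mul_posLog {a M y : ℝ} (ha : 0 ≤ a) (haM : a ≤ M) (hM : 0 < M)
    (hy : 0 < y) : a * log y ≤ a * log M + M * log⁺ (y / M) := by
  have hsplit : log y = log M + log (y / M) := by
    rw [log_div hy.ne' hM.ne']
    ring
  calc a * log y = a * log M + a * log (y / M) := by rw [hsplit, mul_add]
    _ ≤ a * log M + a * log⁺ (y / M) := by gcongr; exact le_max_right _ _
    _ ≤ a * log M + M * log⁺ (y / M) := by gcongr; exact posLog_nonneg

/-- If `M > a₁ ≥ … ≥ aₙ ≥ 1`, then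
`∑_{i=1}^{n} aᵢ log(n/i) ≤ C ⌈log M⌉ ∑ aᵢ` for a universal constant `C`. -/
theorem weighted_log_sum_bound :
    ∃ C : ℝ, 0 < C ∧
      ∀ (n : ℕ) (_ : 0 < n) (M : ℝ) (_ : 1 < M) (a : Fin n → ℝ),
        Antitone a →
        (∀ i, 1 ≤ a i ∧ a i < M) →
        ∑ i : Fin n, a i * Real.log ((n : ℝ) / ((i : ℕ) + 1)) ≤
          C * (⌈Real.log M⌉ : ℝ) * ∑ i : Fin n, a i := by
  refine ⟨2, two_pos, fun n _ M hM a _ ha => ?_⟩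
  have hM0 : 0 < M := one_pos.trans hM
  have hceil : (1 : ℝ) ≤ ⌈log M⌉ := by exact_mod_cast Int.one_le_ceil_iff.2 (log_pos hM)
  have hsum : (n : ℝ) ≤ ∑ i, a i := by
    simpa using sum_le_sum fun i (_ : i ∈ univ) => (ha i).1
  have hposLog : ∑ i : Fin n, log⁺ ((n : ℝ) / (i + 1) / M) ≤ n / M := by
    simp_rw [div_right_comm _ _ M]
    rw [Fin.sum_univ_eq_sum_range (fun i => log⁺ ((n : ℝ) / M / (i + 1)))]
    exact sum_range_posLog_div_succ_le (by positivity) n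
  calc ∑ i : Fin n, a i * log (n / (i + 1))
      ≤ ∑ i : Fin n, (a i * log M + M * log⁺ ((n : ℝ) / (i + 1) / M)) :=
        sum_le_sum fun i _ => mul_log_le_mul_log_add_mul_posLog
          (zero_le_one.trans (ha i).1) (ha i).2.le hM0 (by positivity)
    _ = log M * ∑ i, a i + M * ∑ i : Fin n, log⁺ ((n : ℝ) / (i + 1) / M) := by
        rw [sum_add_distrib, ← sum_mul, ← mul_sum, mul_comm]
    _ ≤ ⌈log M⌉ * ∑ i, a i + M * (n / M) := by
        gcongr
        · exact (Nat.cast_nonneg n).trans hsum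
        · exact Int.le_ceil _
    _ ≤ 2 * ⌈log M⌉ * ∑ i, a i := by
        rw [mul_div_cancel₀ _ hM0.ne']
        nlinarith
end

section
/- For a set of n c-spread arms with means θ₁ ≥ … ≥ θₙ and K = γn ≤ n/2 with γ = Ω(1) and c = O(1), the hardness parameter H^{(t,ε)} = ∑_{i=1}^{n} min{Δᵢ⁻², (Ψₜ^ε)⁻²} satisfies H^{(t,ε)} ≤ C(c,γ) · n/√ε for a constant C depending only on c and γ. More precisely, H^{(t,ε)} = O(c^{3.5} γ^{−0.5}) · n/√ε. -/
/-!
By the spread condition the gaps grow linearly away from the boundary between arms `K` and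
`K + 1`: `Δ_{K+1-d}, Δ_{K+d} ≥ d / (cn)`. So each half of the sum is at most
`∑_d min ((cn)² / d², Ψ⁻²) ≤ 4cn / Ψ`, splitting at `d ≈ cnΨ` and using `∑_{d > D} d⁻² ≤ 2 / D`.
For `Ψ = Ψₜ^ε` we have `Ψ ≥ ε` and `Ψ ≥ (t + 1) / (cn)`; either `t = K - 1`, so `Ψ ≥ γ / c`, or
maximality of `t` fails at `t + 1`, which with the upper spread bound `Δ ≤ c (t + 2) / n` gives
`γεn² < 2c (t + 1)²`. In both cases `εγ ≤ 2c³Ψ²`, hence `H ≤ 8cn / Ψ = O(c^{5/2} γ^{-1/2} n / √ε)`.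
-/

open Finset

/-- The gap `Δᵢ` of arm `i` (arms indexed `1,…,n`, sorted decreasingly). -/
noncomputable def armGap (θ : ℕ → ℝ) (K i : ℕ) : ℝ :=
  if i ≤ K then θ i - θ (K + 1) else θ K - θ i

theorem sum_Icc_min_div_sq_le {A B : ℝ} (hA : 0 ≤ A) (hB : 0 ≤ B) (M : ℕ) {D : ℕ}
    (hD : 1 ≤ D) : ∑ d ∈ Icc 1 M, min (A / (d : ℝ) ^ 2) B ≤ D * B + 2 * A / D := by
  rw [← sum_filter_add_sum_filter_not (Icc 1 M) (· ≤ D)]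
  gcongr ?_ + ?_
  · have hcard : #{d ∈ Icc 1 M | d ≤ D} ≤ D := by
      simpa using card_le_card (s := {d ∈ Icc 1 M | d ≤ D}) (t := Icc 1 D)
        fun d hd => by simp only [mem_filter, mem_Icc] at hd ⊢; omega
    calc ∑ d ∈ Icc 1 M with d ≤ D, min (A / (d : ℝ) ^ 2) B
        ≤ ∑ d ∈ Icc 1 M with d ≤ D, B := sum_le_sum fun _ _ => min_le_right _ _
      _ ≤ D * B := by rw [sum_const, nsmul_eq_mul]; gcongr
  · calc ∑ d ∈ Icc 1 M with ¬d ≤ D, min (A / (d : ℝ) ^ 2) B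
        ≤ ∑ d ∈ Ioo D (M + 1), A / (d : ℝ) ^ 2 := by
          refine (sum_le_sum fun _ _ => min_le_left _ _).trans
            (sum_le_sum_of_subset_of_nonneg (fun d hd => ?_) fun _ _ _ => by positivity)
          simp only [mem_filter, mem_Icc, mem_Ioo] at hd ⊢
          omega
      _ = A * ∑ d ∈ Ioo D (M + 1), ((d : ℝ) ^ 2)⁻¹ := by simp only [mul_sum, div_eq_mul_inv]
      _ ≤ A * (2 / (D + 1)) := by gcongr; exact sum_Ioo_inv_sq_le D (M + 1)
      _ ≤ 2 * A / D := by
          rw [mul_div_assoc', mul_comm A]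
          gcongr
          linarith

theorem sum_Icc_min_inv_sq_le_of_div_le {g : ℕ → ℝ} {a ψ : ℝ} (M : ℕ) (ha : 0 < a)
    (hψ : 0 < ψ) (haψ : 1 ≤ a * ψ) (hg : ∀ d ∈ Icc 1 M, d / a ≤ g d) :
    ∑ d ∈ Icc 1 M, min ((g d ^ 2)⁻¹) ((ψ ^ 2)⁻¹) ≤ 4 * a / ψ := by
  obtain ⟨D, hD⟩ : ∃ D : ℕ, D = ⌈a * ψ⌉₊ := ⟨_, rfl⟩
  have hD_ge : a * ψ ≤ D := hD ▸ Nat.le_ceil _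
  have hD_le : (D : ℝ) ≤ a * ψ + 1 := hD ▸ (Nat.ceil_lt_add_one (by positivity)).le
  have hD_one : 1 ≤ D := by exact_mod_cast haψ.trans hD_ge
  have hD_pos : (0 : ℝ) < D := by linarith
  calc ∑ d ∈ Icc 1 M, min ((g d ^ 2)⁻¹) ((ψ ^ 2)⁻¹)
      ≤ ∑ d ∈ Icc 1 M, min (a ^ 2 / (d : ℝ) ^ 2) ((ψ ^ 2)⁻¹) := by
        refine sum_le_sum fun d hd => min_le_min_right _ ?_
        have hd_pos : (0 : ℝ) < d := by simp only [mem_Icc] at hd; exact_mod_cast hd.1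
        rw [← inv_div, ← div_pow]
        exact inv_anti₀ (by positivity) (pow_le_pow_left₀ (by positivity) (hg d hd) 2)
    _ ≤ D * (ψ ^ 2)⁻¹ + 2 * a ^ 2 / D :=
        sum_Icc_min_div_sq_le (by positivity) (by positivity) M hD_one
    _ ≤ 2 * a / ψ + 2 * a / ψ := by
        refine add_le_add ?_ ?_
        · rw [← div_eq_mul_inv, div_le_div_iff₀ (by positivity) hψ]
          nlinarith
        · rw [div_le_div_iff₀ hD_pos hψ]
          nlinarith
    _ = 4 * a / ψ := by ring

theorem sum_Icc_one_eq_sum_reflect_add_sum_shift {M : Type*} [AddCommMonoid M] (f : ℕ → M)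
    {K n : ℕ} (hKn : K ≤ n) :
    ∑ i ∈ Icc 1 n, f i = ∑ d ∈ Icc 1 K, f (K + 1 - d) + ∑ d ∈ Icc 1 (n - K), f (K + d) := by
  rw [show Icc 1 n = Ioc 0 n from Icc_add_one_left_eq_Ioc 0 n,
    ← sum_Ioc_consecutive f (Nat.zero_le K) hKn]
  congr 1
  · refine sum_nbij' (fun i => K + 1 - i) (fun d => K + 1 - d) ?_ ?_ ?_ ?_ ?_ <;>
      intro i hi <;> simp only [mem_Ioc, mem_Icc] at hi ⊢ <;>
      first | omega | congr 1; omega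
  · refine sum_nbij' (fun i => i - K) (fun d => K + d) ?_ ?_ ?_ ?_ ?_ <;>
      intro i hi <;> simp only [mem_Ioc, mem_Icc] at hi ⊢ <;>
      first | omega | congr 1; omega

section armGap

variable {θ : ℕ → ℝ} {K d : ℕ}

theorem armGap_add_one_sub (hd : 1 ≤ d) :
    armGap θ K (K + 1 - d) = θ (K + 1 - d) - θ (K + 1) :=
  if_pos (by omega)

theorem armGap_add (hd : 1 ≤ d) : armGap θ K (K + d) = θ K - θ (K + d) :=
  if_neg (by omega)

end armGap

def IsSpread (c : ℝ) (n : ℕ) (θ : ℕ → ℝ) : Prop :=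
  ∀ i ∈ Icc 1 n, ∀ j ∈ Icc 1 n,
    |(i : ℝ) - j| / (c * n) ≤ |θ i - θ j| ∧ |θ i - θ j| ≤ c * |(i : ℝ) - j| / n

namespace IsSpread

variable {c : ℝ} {n K d : ℕ} {θ : ℕ → ℝ}

theorem div_le_sub (hθ : IsSpread c n θ) (hanti : AntitoneOn θ (Icc 1 n)) {i j : ℕ}
    (hi : i ∈ Icc 1 n) (hj : j ∈ Icc 1 n) (hij : i ≤ j) :
    ((j - i : ℕ) : ℝ) / (c * n) ≤ θ i - θ j := by
  have h := (hθ i hi j hj).1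
  rwa [abs_of_nonneg (sub_nonneg.2 (hanti hi hj hij)), abs_sub_comm,
    abs_of_nonneg (by simpa using hij), ← Nat.cast_sub hij] at h

theorem sub_le (hθ : IsSpread c n θ) {i j : ℕ} (hi : i ∈ Icc 1 n) (hj : j ∈ Icc 1 n)
    (hij : i ≤ j) : θ i - θ j ≤ c * ((j - i : ℕ) : ℝ) / n := by
  have h := (hθ i hi j hj).2
  rw [abs_sub_comm (i : ℝ), abs_of_nonneg (a := (j : ℝ) - i) (by simpa using hij),
    ← Nat.cast_sub hij] at h
  exact (le_abs_self _).trans h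

theorem div_le_armGap_add_one_sub (hθ : IsSpread c n θ) (hanti : AntitoneOn θ (Icc 1 n))
    (hKn : K < n) (hd : d ∈ Icc 1 K) : d / (c * n) ≤ armGap θ K (K + 1 - d) := by
  rw [mem_Icc] at hd
  have h := hθ.div_le_sub hanti (i := K + 1 - d) (j := K + 1)
    (by rw [mem_Icc]; omega) (by rw [mem_Icc]; omega) (by omega)
  rwa [Nat.sub_sub_self (by omega), ← armGap_add_one_sub hd.1] at h

theorem div_le_armGap_add (hθ : IsSpread c n θ) (hanti : AntitoneOn θ (Icc 1 n)) (hK : 1 ≤ K)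
    (hd : d ∈ Icc 1 (n - K)) : d / (c * n) ≤ armGap θ K (K + d) := by
  rw [mem_Icc] at hd
  have h := hθ.div_le_sub hanti (i := K) (j := K + d)
    (by rw [mem_Icc]; omega) (by rw [mem_Icc]; omega) (by omega)
  rwa [Nat.add_sub_cancel_left, ← armGap_add hd.1] at h

theorem armGap_add_one_sub_le (hθ : IsSpread c n θ) (hKn : K < n) (hd : d ∈ Icc 1 K) :
    armGap θ K (K + 1 - d) ≤ c * d / n := by
  rw [mem_Icc] at hd
  have h := hθ.sub_le (i := K + 1 - d) (j := K + 1)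
    (by rw [mem_Icc]; omega) (by rw [mem_Icc]; omega) (by omega)
  rwa [Nat.sub_sub_self (by omega), ← armGap_add_one_sub hd.1] at h

theorem armGap_add_le (hθ : IsSpread c n θ) (hK : 1 ≤ K) (hd : d ∈ Icc 1 (n - K)) :
    armGap θ K (K + d) ≤ c * d / n := by
  rw [mem_Icc] at hd
  have h := hθ.sub_le (i := K) (j := K + d)
    (by rw [mem_Icc]; omega) (by rw [mem_Icc]; omega) (by omega)
  rwa [Nat.add_sub_cancel_left, ← armGap_add hd.1] at h

theorem sum_min_inv_sq_armGap_le (hθ : IsSpread c n θ) (hanti : AntitoneOn θ (Icc 1 n))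
    (hK : 1 ≤ K) (hKn : K < n) (hc : 0 < c) {ψ : ℝ} (hψ : 0 < ψ) (hcnψ : 1 ≤ c * n * ψ) :
    ∑ i ∈ Icc 1 n, min ((armGap θ K i ^ 2)⁻¹) ((ψ ^ 2)⁻¹) ≤ 8 * (c * n) / ψ := by
  have hcn : 0 < c * n := mul_pos hc (Nat.cast_pos.2 (by omega))
  have hleft := sum_Icc_min_inv_sq_le_of_div_le K hcn hψ hcnψ
    fun d hd => hθ.div_le_armGap_add_one_sub hanti hKn hd
  have hright := sum_Icc_min_inv_sq_le_of_div_le (n - K) hcn hψ hcnψ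
    fun d hd => hθ.div_le_armGap_add hanti hK hd
  rw [sum_Icc_one_eq_sum_reflect_add_sum_shift _ hKn.le]
  calc _ ≤ 4 * (c * n) / ψ + 4 * (c * n) / ψ := add_le_add hleft hright
    _ = 8 * (c * n) / ψ := by ring

theorem succ_le_mul_max_armGap (hθ : IsSpread c n θ) (hanti : AntitoneOn θ (Icc 1 n))
    (hc : 0 < c) {t : ℕ} (htK : t < K) (hn : K + t + 1 ≤ n) (ε : ℝ) :
    (t : ℝ) + 1 ≤ c * n * max ε (min (armGap θ K (K - t)) (armGap θ K (K + t + 1))) := by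
  have hl := hθ.div_le_armGap_add_one_sub hanti (K := K) (d := t + 1) (by omega)
    (by rw [mem_Icc]; omega)
  have hr := hθ.div_le_armGap_add hanti (K := K) (d := t + 1) (by omega)
    (by rw [mem_Icc]; omega)
  rw [Nat.add_sub_add_right] at hl
  rw [← add_assoc] at hr
  push_cast at hl hr
  rw [← div_le_iff₀' (mul_pos hc (Nat.cast_pos.2 (by omega)))]
  exact (le_min hl hr).trans (le_max_right _ _)

theorem mul_lt_of_not_tolerant (hθ : IsSpread c n θ) {s : ℕ} {ε : ℝ} (hsK : s < K)
    (hn : K + s + 1 ≤ n)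
    (h : ¬(armGap θ K (K - s) * s ≤ K * ε ∧ armGap θ K (K + s + 1) * s ≤ K * ε)) :
    K * ε < c * (s + 1) / n * s := by
  have hl := hθ.armGap_add_one_sub_le (K := K) (d := s + 1) (by omega) (by rw [mem_Icc]; omega)
  have hr := hθ.armGap_add_le (K := K) (d := s + 1) (by omega) (by rw [mem_Icc]; omega)
  rw [Nat.add_sub_add_right] at hl
  rw [← add_assoc] at hr
  push_cast at hl hr
  rw [not_and_or, not_le, not_le] at h
  rcases h with h | h
  · exact h.trans_le (mul_le_mul_of_nonneg_right hl s.cast_nonneg)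
  · exact h.trans_le (mul_le_mul_of_nonneg_right hr s.cast_nonneg)

theorem mul_le_sq_max_armGap_of_maximal {γ ε : ℝ} {t : ℕ} (hθ : IsSpread c n θ)
    (hanti : AntitoneOn θ (Icc 1 n)) (hK : 1 ≤ K) (h2K : 2 * K ≤ n) (hc : 1 ≤ c) (hε : 0 < ε)
    (hKγ : (K : ℝ) = γ * n) (htK : t ≤ K - 1)
    (hmax : ∀ s : ℕ, t < s → s ≤ K - 1 →
      ¬(armGap θ K (K - s) * s ≤ K * ε ∧ armGap θ K (K + s + 1) * s ≤ K * ε)) :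
    ε * γ ≤ 2 * c ^ 3 * max ε (min (armGap θ K (K - t)) (armGap θ K (K + t + 1))) ^ 2 := by
  have hlow :=
    hθ.succ_le_mul_max_armGap hanti (by linarith) (K := K) (t := t) (by omega) (by omega) ε
  set Ψ := max ε (min (armGap θ K (K - t)) (armGap θ K (K + t + 1)))
  have hn : (0 : ℝ) < n := Nat.cast_pos.2 (by omega)
  have hγ : 0 < γ := pos_of_mul_pos_left (hKγ ▸ Nat.cast_pos.2 hK) hn.le
  have hεΨ : ε ≤ Ψ := le_max_left _ _
  rcases htK.eq_or_lt with rfl | htK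
  · have hK' : ((K - 1 : ℕ) : ℝ) + 1 = K := by exact_mod_cast Nat.sub_add_cancel hK
    rw [hK', hKγ] at hlow
    have hγΨ : γ ≤ c * Ψ := le_of_mul_le_mul_right (by linarith) hn
    calc ε * γ ≤ Ψ * (c * Ψ) := mul_le_mul hεΨ hγΨ hγ.le (by linarith)
      _ = c * Ψ ^ 2 := by ring
      _ ≤ 2 * c ^ 3 * Ψ ^ 2 := by gcongr; nlinarith [one_le_pow₀ (n := 2) hc]
  · have h := hθ.mul_lt_of_not_tolerant (s := t + 1) (by omega) (by omega)
      (hmax (t + 1) (by omega) (by omega))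
    rw [hKγ, div_mul_eq_mul_div, lt_div_iff₀ hn] at h
    push_cast at h
    have h1 : ε * γ * n ^ 2 < 2 * c * ((t : ℝ) + 1) ^ 2 := by
      have : 0 ≤ c * ((t : ℝ) + 1) * t := by positivity
      nlinarith
    have h2 : ((t : ℝ) + 1) ^ 2 ≤ (c * n * Ψ) ^ 2 := pow_le_pow_left₀ (by positivity) hlow 2
    have h3 : ε * γ * n ^ 2 ≤ 2 * c ^ 3 * Ψ ^ 2 * n ^ 2 := by nlinarith
    exact le_of_mul_le_mul_right h3 (by positivity)

end IsSpread

theorem div_le_rpow_of_mul_le_sq {c γ ε Ψ x : ℝ} (hc : 1 ≤ c) (hγ : 0 < γ) (hε : 0 < ε)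
    (hΨ : 0 < Ψ) (hx : 0 ≤ x) (h : ε * γ ≤ 2 * c ^ 3 * Ψ ^ 2) :
    8 * (c * x) / Ψ ≤ 16 * c ^ ((7 : ℝ) / 2) * γ ^ (-(1 : ℝ) / 2) * x / √ε := by
  have hc0 : 0 < c := one_pos.trans_le hc
  have hεγ : 0 < √ε * √γ := by positivity
  have hc_rpow : c ^ ((7 : ℝ) / 2) = c ^ 3 * √c := by
    rw [show (7 : ℝ) / 2 = (3 : ℕ) + 1 / 2 by norm_num, Real.rpow_add hc0, Real.rpow_natCast,
      Real.sqrt_eq_rpow]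
  have hγ_rpow : γ ^ (-(1 : ℝ) / 2) = (√γ)⁻¹ := by
    rw [neg_div, Real.rpow_neg hγ.le, Real.sqrt_eq_rpow]
  have hsqrt : √ε * √γ ≤ 2 * c ^ 2 * √c * Ψ := by
    rw [← Real.sqrt_mul hε.le, Real.sqrt_le_left (by positivity)]
    calc ε * γ ≤ 2 * c ^ 3 * Ψ ^ 2 := h
      _ ≤ 2 * c ^ 3 * Ψ ^ 2 * (2 * c ^ 2) := le_mul_of_one_le_right (by positivity)
          (by nlinarith [one_le_pow₀ (n := 2) hc])
      _ = (2 * c ^ 2 * √c * Ψ) ^ 2 := by rw [mul_pow, mul_pow, Real.sq_sqrt hc0.le]; ring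
  calc 8 * (c * x) / Ψ = 8 * (c * x) * (√ε * √γ) / (Ψ * (√ε * √γ)) := by
        rw [mul_div_mul_right _ _ hεγ.ne']
    _ ≤ 8 * (c * x) * (2 * c ^ 2 * √c * Ψ) / (Ψ * (√ε * √γ)) := by gcongr
    _ = 16 * c ^ ((7 : ℝ) / 2) * γ ^ (-(1 : ℝ) / 2) * x / √ε := by
        rw [hc_rpow, hγ_rpow]
        field_simp
        ring

/-- For `c`-spread arms with `K = γn ≤ n/2`, `γ = Ω(1)`, `c = O(1)`, the hardness
parameter `H^{(t,ε)} = ∑ᵢ min{Δᵢ⁻², (Ψₜ^ε)⁻²}` is `O(c^{3.5} γ^{-0.5}) ⋅ n / √ε`. -/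
theorem hardness_upper_bound_c_spread :
    ∃ C : ℝ, 0 < C ∧
      ∀ (n K t : ℕ) (c γ ε : ℝ) (θ : ℕ → ℝ),
        0 < n → 1 ≤ K → 2 * K ≤ n →
        1 ≤ c → 0 < γ → (K : ℝ) = γ * n →
        0 < ε → ε < 1 →
        (∀ i ∈ Icc 1 n, 0 ≤ θ i ∧ θ i ≤ 1) →
        (∀ i ∈ Icc 1 n, ∀ j ∈ Icc 1 n, i ≤ j → θ j ≤ θ i) →  -- sorted decreasingly
        -- c-spread condition
        (∀ i ∈ Icc 1 n, ∀ j ∈ Icc 1 n,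
          (|(i : ℝ) - j|) / (c * n) ≤ |θ i - θ j| ∧
          |θ i - θ j| ≤ c * (|(i : ℝ) - j|) / n) →
        -- t is the largest element of {0,…,K-1} with both tolerance conditions
        t ≤ K - 1 →
        armGap θ K (K - t) * t ≤ K * ε →
        armGap θ K (K + t + 1) * t ≤ K * ε →
        (∀ s : ℕ, t < s → s ≤ K - 1 →
          ¬(armGap θ K (K - s) * s ≤ K * ε ∧ armGap θ K (K + s + 1) * s ≤ K * ε)) →
        (∑ i ∈ Icc 1 n,
            min ((armGap θ K i) ^ (2 : ℕ))⁻¹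
              ((max ε (min (armGap θ K (K - t)) (armGap θ K (K + t + 1)))) ^ (2 : ℕ))⁻¹)
          ≤ C * c ^ ((7 : ℝ) / 2) * γ ^ (-(1 : ℝ) / 2) * n / Real.sqrt ε := by
  refine ⟨16, by norm_num, ?_⟩
  intro n K t c γ ε θ hn hK h2K hc hγ hKγ hε _ _ (hanti : AntitoneOn θ (Icc 1 n))
    (hθ : IsSpread c n θ) htK _ _ hmax
  have hkey := hθ.mul_le_sq_max_armGap_of_maximal hanti hK h2K hc hε hKγ htK hmax
  have hlow :=
    hθ.succ_le_mul_max_armGap hanti (by linarith) (K := K) (t := t) (by omega) (by omega) ε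
  set Ψ := max ε (min (armGap θ K (K - t)) (armGap θ K (K + t + 1)))
  have hΨ : 0 < Ψ := hε.trans_le (le_max_left _ _)
  calc _ ≤ 8 * (c * n) / Ψ :=
        hθ.sum_min_inv_sq_armGap_le hanti hK (by omega) (by linarith) hΨ
          (by linarith [t.cast_nonneg (α := ℝ)])
    _ ≤ _ := div_le_rpow_of_mul_le_sq hc hγ hε hΨ n.cast_nonneg hkey
end

section
/- Let θ₁ ≥ … ≥ θₙ be real numbers, A ⊆ {1,…,K}, B ⊆ {K+1,…,n}, S = [n]∖(A∪B), and suppose estimates θ̃ᵢ satisfy |θ̃ᵢ − θᵢ| < Δ for all i ∈ S. Let θ̃_a be the (K−|A|+1)-th largest estimate among arms in S. Then for every i ∈ S, θ̃ᵢ − θ̃_a > θᵢ − θ_{K+1} − 2Δ. -/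
/-!
Only the arms of `[K] \ A` can have an estimate above `θ_{K+1} + Δ`: such an estimate forces
`θᵢ > θ_{K+1}`, hence `i ≤ K` by monotonicity. These are at most `K - |A|` arms, so the
`(K - |A| + 1)`-th largest estimate in `S` is at most `θ_{K+1} + Δ`, while `θ̃ᵢ > θᵢ - Δ`.
-/

open Finset

/-- The `k`-th largest value of `f` over the finite set `s` (`k ≥ 1`). -/
noncomputable def kthLargest (s : Finset ℕ) (f : ℕ → ℝ) (k : ℕ) : ℝ :=
  ((s.val.map f).sort (· ≤ ·)).getD (s.card - k) 0

theorem List.Pairwise.length_sub_le_countP_lt {α : Type*} [LinearOrder α] {l : List α}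
    (hl : l.Pairwise (· ≤ ·)) {m : ℕ} (hm : m < l.length) {c : α} (hc : c < l[m]) :
    l.length - m ≤ l.countP (fun x => Decidable.decide (c < x)) := by
  have hdrop : ∀ x ∈ l.drop m, c < x := by
    intro x hx
    obtain ⟨j, hj, rfl⟩ := List.mem_iff_getElem.mp hx
    rw [List.getElem_drop]
    have hmj : m + j < l.length := by rw [List.length_drop] at hj; omega
    exact hc.trans_le (hl.rel_get_of_le (a := ⟨m, hm⟩) (b := ⟨m + j, hmj⟩) (by simp))
  calc l.length - m = (l.drop m).countP (fun x => Decidable.decide (c < x)) := by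
        rw [List.countP_eq_length.mpr (by simpa using hdrop), List.length_drop]
    _ ≤ l.countP (fun x => Decidable.decide (c < x)) := (List.drop_sublist _ _).countP_le

theorem kthLargest_le_of_card_filter_lt {s : Finset ℕ} {f : ℕ → ℝ} {k : ℕ} {c : ℝ}
    (hk : 1 ≤ k) (hks : k ≤ s.card) (hcount : (s.filter (fun x => c < f x)).card < k) :
    kthLargest s f k ≤ c := by
  by_contra! h
  set l := (s.val.map f).sort (· ≤ ·)
  have hlen : l.length = s.card := by simp [l, Multiset.length_sort]
  have hidx : s.card - k < l.length := by omega
  rw [kthLargest, List.getD_eq_getElem l 0 hidx] at h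
  have hcountP : l.countP (fun x => decide (c < x)) = (s.filter (fun x => c < f x)).card := by
    rw [← Multiset.coe_countP, Multiset.sort_eq, Multiset.countP_map]
    rfl
  have hsorted : l.Pairwise (· ≤ ·) := Multiset.pairwise_sort _ _
  have := hsorted.length_sub_le_countP_lt hidx h
  omega

theorem le_of_apply_succ_lt_apply {θ : ℕ → ℝ} {n K x : ℕ}
    (hsorted : ∀ i ∈ Icc 1 n, ∀ j ∈ Icc 1 n, i ≤ j → θ j ≤ θ i)
    (hx : x ∈ Icc 1 n) (hθ : θ (K + 1) < θ x) : x ≤ K := by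
  rw [mem_Icc] at hx
  by_contra! hxK
  have := hsorted (K + 1) (by rw [mem_Icc]; omega) x (by rw [mem_Icc]; omega) hxK
  linarith

theorem filter_lt_estimate_subset_sdiff {θ θt : ℕ → ℝ} {Δ : ℝ} {n K : ℕ} {A S : Finset ℕ}
    (hsorted : ∀ i ∈ Icc 1 n, ∀ j ∈ Icc 1 n, i ≤ j → θ j ≤ θ i)
    (hS : S ⊆ Icc 1 n \ A) (hclose : ∀ i ∈ S, |θt i - θ i| < Δ) :
    S.filter (fun x => θ (K + 1) + Δ < θt x) ⊆ Icc 1 K \ A := by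
  intro x hx
  obtain ⟨hxS, hxgt⟩ := mem_filter.mp hx
  obtain ⟨hxn, hxA⟩ := mem_sdiff.mp (hS hxS)
  have hθ : θ (K + 1) < θ x := by linarith [(abs_lt.mp (hclose x hxS)).2]
  have hxK := le_of_apply_succ_lt_apply hsorted hxn hθ
  exact mem_sdiff.mpr ⟨mem_Icc.mpr ⟨(mem_Icc.mp hxn).1, hxK⟩, hxA⟩

theorem adaptiveTopK_gap_estimate_general
    (n K : ℕ)
    (θ θt : ℕ → ℝ) (Δ : ℝ)
    (hsorted : ∀ i ∈ Icc 1 n, ∀ j ∈ Icc 1 n, i ≤ j → θ j ≤ θ i)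
    (A B : Finset ℕ)
    (hA : A ⊆ Icc 1 K)
    (S : Finset ℕ) (hS : S = Icc 1 n \ (A ∪ B))
    (hcard : K - A.card + 1 ≤ S.card)
    (hclose : ∀ i ∈ S, |θt i - θ i| < Δ) :
    ∀ i ∈ S, θt i - kthLargest S θt (K - A.card + 1) > θ i - θ (K + 1) - 2 * Δ := by
  intro i hi
  have hSA : S ⊆ Icc 1 n \ A := hS ▸ sdiff_subset_sdiff le_rfl subset_union_left
  have hfew : (S.filter (fun x => θ (K + 1) + Δ < θt x)).card < K - A.card + 1 := by
    have := card_le_card (filter_lt_estimate_subset_sdiff (K := K) hsorted hSA hclose)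
    rw [card_sdiff_of_subset hA, Nat.card_Icc] at this
    omega
  have hkth := kthLargest_le_of_card_filter_lt (by omega) hcard hfew
  linarith [(abs_lt.mp (hclose i hi)).1]

/-- With `A ⊆ [K]`, `B ⊆ {K+1,…,n}`, `S = [n] ∖ (A ∪ B)`,
`|S| ≥ K − |A| + 1`, and estimates within `Δ` on `S`, every `i ∈ S` satisfies
`θ̃ᵢ − θ̃_a > θᵢ − θ_{K+1} − 2Δ`, where `θ̃_a` is the `(K−|A|+1)`-th largest
estimate in `S`. -/
theorem adaptiveTopK_gap_estimate
    (n K : ℕ) (hK : 1 ≤ K) (hKn : K + 1 ≤ n)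
    (θ θt : ℕ → ℝ) (Δ : ℝ) (hΔ : 0 < Δ)
    (hsorted : ∀ i ∈ Icc 1 n, ∀ j ∈ Icc 1 n, i ≤ j → θ j ≤ θ i)
    (A B : Finset ℕ)
    (hA : A ⊆ Icc 1 K) (hB : B ⊆ Icc (K + 1) n)
    (S : Finset ℕ) (hS : S = Icc 1 n \ (A ∪ B))
    (hcard : K - A.card + 1 ≤ S.card)
    (hclose : ∀ i ∈ S, |θt i - θ i| < Δ) :
    ∀ i ∈ S, θt i - kthLargest S θt (K - A.card + 1) > θ i - θ (K + 1) - 2 * Δ :=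
  adaptiveTopK_gap_estimate_general n K θ θt Δ hsorted A B hA S hS hcard hclose
end

section
/- Any algorithm that, given a coin which is either (1/2+η)-biased or (1/2−η)-biased (η = 10⁻⁴), outputs the correct bias with probability at least 1−ε while being allowed to output 'unknown' with probability at most 0.9, must use Ω(log(1/ε)) coin tosses. -/
/-!
Under either bias the algorithm says "unknown" with probability at most `0.9` and errs with
probability at most `ε`, so under bias `1/2 + η` it answers the correct `some true` with
probability at least `1/10 - ε ≥ 1/20`. Each toss changes the likelihood by a factor of at most
`r = (1/2 + η) / (1/2 - η)`, so that event has probability at most `r ^ m` times its probability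
under bias `1/2 - η`, which is an error and hence at most `ε`. Thus `1/20 ≤ r ^ m ε`, i.e.
`m ≥ log (1/(20 ε)) / log r`, which is at least `log (1/ε) / (2 log r)` once `ε ≤ 1/400`.
-/

open Finset

/-- Probability, under i.i.d. `p`-biased tosses, of the set of toss sequences
satisfying `E`. -/
noncomputable def tossProb (m : ℕ) (p : ℝ) (E : (Fin m → Bool) → Prop)
    [DecidablePred E] : ℝ :=
  ∑ x : Fin m → Bool, if E x then ∏ i, (if x i then p else 1 - p) else 0

theorem sum_prod_bernoulli_eq_one (m : ℕ) (p : ℝ) :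
    ∑ x : Fin m → Bool, ∏ i, (if x i then p else 1 - p) = 1 := by
  rw [← Fintype.prod_sum (fun (_ : Fin m) (b : Bool) => if b then p else 1 - p)]
  simp

theorem sum_tossProb_fiber_eq_one {α : Type*} [Fintype α] [DecidableEq α] (m : ℕ) (p : ℝ)
    (g : (Fin m → Bool) → α) : ∑ a, tossProb m p (fun x => g x = a) = 1 := by
  unfold tossProb
  rw [Finset.sum_comm]
  simp_rw [Finset.sum_ite_eq, Finset.mem_univ, if_true]
  exact sum_prod_bernoulli_eq_one m p

theorem tossProb_le_pow_mul_tossProb {m : ℕ} {p q r : ℝ} (hp₀ : 0 ≤ p) (hp₁ : p ≤ 1)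
    (hheads : p ≤ r * q) (htails : 1 - p ≤ r * (1 - q)) (E : (Fin m → Bool) → Prop)
    [DecidablePred E] : tossProb m p E ≤ r ^ m * tossProb m q E := by
  unfold tossProb
  rw [Finset.mul_sum]
  refine Finset.sum_le_sum fun x _ => ?_
  split_ifs
  · calc ∏ i, (if x i then p else 1 - p)
        ≤ ∏ i, r * (if x i then q else 1 - q) :=
          Finset.prod_le_prod (fun i _ => by split_ifs <;> linarith)
            (fun i _ => by split_ifs <;> assumption)
      _ = r ^ m * ∏ i, (if x i then q else 1 - q) := by
          rw [Finset.prod_mul_distrib, Finset.prod_const, Finset.card_univ, Fintype.card_fin]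
  · rw [mul_zero]

theorem log_one_div_le_of_le_pow_mul {c ε r : ℝ} {m : ℕ} (hc : 0 < c) (hε : 0 < ε)
    (hεc : ε ≤ c ^ 2) (h : c ≤ r ^ m * ε) : Real.log (1 / ε) ≤ 2 * m * Real.log r := by
  have hrm : c / ε ≤ r ^ m := (div_le_iff₀ hε).2 h
  have hlog : Real.log c + Real.log (1 / ε) ≤ m * Real.log r := by
    rw [← Real.log_pow, ← Real.log_mul hc.ne' (by positivity), ← div_eq_mul_one_div]
    exact Real.log_le_log (by positivity) hrm
  have hsmall : Real.log ε ≤ 2 * Real.log c := by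
    simpa [Real.log_pow] using Real.log_le_log hε hεc
  rw [one_div, Real.log_inv] at hlog ⊢
  linarith

/-- Lower bound for the coin-tossing problem: any algorithm (a function of the
`m` toss outcomes, outputting `some true` for bias `1/2+η`, `some false` for
bias `1/2−η`, or `none` for "unknown") that outputs `unknown` with probability
at most `0.9` and errs with probability at most `ε` (under either bias,
`η = 10⁻⁴`) must use `m = Ω(log(1/ε))` tosses. -/
theorem coin_tossing_lower_bound :
    ∃ C : ℝ, 0 < C ∧ ∃ ε₀ : ℝ, 0 < ε₀ ∧
      ∀ ε : ℝ, 0 < ε → ε < ε₀ →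
      ∀ (m : ℕ) (f : (Fin m → Bool) → Option Bool),
        tossProb m (1 / 2 + 1 / 10000) (fun x => f x = none) ≤ 0.9 →
        tossProb m (1 / 2 - 1 / 10000) (fun x => f x = none) ≤ 0.9 →
        tossProb m (1 / 2 + 1 / 10000) (fun x => f x = some false) ≤ ε →
        tossProb m (1 / 2 - 1 / 10000) (fun x => f x = some true) ≤ ε →
        C * Real.log (1 / ε) ≤ (m : ℝ) := by
  set r : ℝ := 5001 / 4999
  have hlogr : 0 < Real.log r := Real.log_pos (by norm_num)
  refine ⟨1 / (2 * Real.log r), by positivity, 1 / 400, by norm_num, ?_⟩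
  intro ε hε hε₀ m f hnone _ hfalse htrue
  have hmass := sum_tossProb_fiber_eq_one m (1 / 2 + 1 / 10000) f
  simp only [Fintype.sum_option, Fintype.sum_bool] at hmass
  have hratio := tossProb_le_pow_mul_tossProb (m := m) (p := 1 / 2 + 1 / 10000)
    (q := 1 / 2 - 1 / 10000) (r := r) (by norm_num) (by norm_num) (by norm_num) (by norm_num)
    (fun x => f x = some true)
  have hrm : (1 / 20 : ℝ) ≤ r ^ m * ε := by
    have : (0 : ℝ) < r ^ m := by positivity
    nlinarith
  have hlog := log_one_div_le_of_le_pow_mul (by norm_num) hε (by linarith) hrm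
  rw [div_mul_eq_mul_div, one_mul, div_le_iff₀ (by positivity)]
  linarith
end

section
/- For positive reals where each arm i is pulled at most ∑_{j=1}^{rᵢ} 2^{2j} ln(2nj²/δ) times with rᵢ ≤ log₂ min{Δᵢ⁻¹, (Δₜ^ε)⁻¹} + O(1), the total number of pulls over all n arms is O((log log (Δₜ^ε)⁻¹ + log n + log δ⁻¹) · ∑_{i=1}^{n} min{Δᵢ⁻², (Δₜ^ε)⁻²}). -/
/-!
Round `j` of the sum costs `4ʲ · log(2nj²/δ)`, so an arm's sum is a geometric series dominated by
its last term: at most `(4/3) · 4^rᵢ · log(2n rᵢ²/δ)`. The hypothesis on `rᵢ` turns `4^rᵢ` into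
`4^c₀ · min{Δᵢ⁻¹, (Δₜ^ε)⁻¹}²`, and since `rᵢ ≤ (1 + max c₀ 0) log₂ (Δₜ^ε)⁻¹`, the logarithm
is at most `log n + log δ⁻¹ + 2 log log (Δₜ^ε)⁻¹ + O(1)`. The additive constant is absorbed because
`log log (Δₜ^ε)⁻¹ + log n + log δ⁻¹` is bounded below by `log (2 log 2) > 0`.
-/

open Finset Real

lemma sum_Icc_two_pow_two_mul_le (R : ℕ) :
    ∑ j ∈ Icc 1 R, (2 : ℝ) ^ (2 * j) ≤ 4 / 3 * 4 ^ R := by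
  simp only [pow_mul, show (2 : ℝ) ^ 2 = 4 by norm_num]
  induction R with
  | zero => norm_num
  | succ R ih =>
    rw [sum_Icc_succ_top (Nat.le_add_left 1 R), pow_succ]
    linarith

lemma one_le_two_mul_mul_sq_div {n : ℕ} {δ x : ℝ} (hn : 1 ≤ n) (hδ : 0 < δ) (hδ1 : δ ≤ 1)
    (hx : 1 ≤ x) : 1 ≤ 2 * n * x ^ 2 / δ := by
  have hn : (1 : ℝ) ≤ n := by exact_mod_cast hn
  rw [one_le_div hδ]
  nlinarith [one_le_pow₀ (n := 2) hx]

lemma sum_two_pow_two_mul_mul_log_le {n : ℕ} {δ : ℝ} (hn : 1 ≤ n) (hδ : 0 < δ) (hδ1 : δ ≤ 1)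
    {x : ℝ} (hx : 1 ≤ x) (R : ℕ) (hRx : (R : ℝ) ≤ x) :
    ∑ j ∈ Icc 1 R, (2 : ℝ) ^ (2 * j) * log (2 * n * j ^ 2 / δ) ≤
      4 / 3 * 4 ^ R * log (2 * n * x ^ 2 / δ) := by
  have hlog_nonneg := log_nonneg (one_le_two_mul_mul_sq_div hn hδ hδ1 hx)
  calc ∑ j ∈ Icc 1 R, (2 : ℝ) ^ (2 * j) * log (2 * n * j ^ 2 / δ)
      ≤ ∑ j ∈ Icc 1 R, (2 : ℝ) ^ (2 * j) * log (2 * n * x ^ 2 / δ) := by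
        refine sum_le_sum fun j hj => ?_
        have hjx : (j : ℝ) ≤ x := (Nat.cast_le.mpr (mem_Icc.mp hj).2).trans hRx
        have hj : (1 : ℝ) ≤ j := by exact_mod_cast (mem_Icc.mp hj).1
        gcongr
    _ = (∑ j ∈ Icc 1 R, (2 : ℝ) ^ (2 * j)) * log (2 * n * x ^ 2 / δ) := by rw [sum_mul]
    _ ≤ 4 / 3 * 4 ^ R * log (2 * n * x ^ 2 / δ) := by
        gcongr
        exact sum_Icc_two_pow_two_mul_le R

lemma four_pow_le_of_le_logb_add {M c : ℝ} {R : ℕ} (hM : 0 < M) (hR : (R : ℝ) ≤ logb 2 M + c) :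
    (4 : ℝ) ^ R ≤ 4 ^ c * M ^ 2 := by
  have h4 : (4 : ℝ) ^ logb 2 M = M ^ 2 := by
    rw [show (4 : ℝ) = 2 ^ (2 : ℝ) by norm_num, ← rpow_mul (by norm_num), mul_comm,
      rpow_mul (by norm_num), rpow_logb two_pos (by norm_num) hM, rpow_two]
  calc (4 : ℝ) ^ R = 4 ^ (R : ℝ) := (rpow_natCast 4 R).symm
    _ ≤ 4 ^ (logb 2 M + c) := rpow_le_rpow_of_exponent_le (by norm_num) hR
    _ = 4 ^ c * M ^ 2 := by rw [rpow_add (by norm_num), h4, mul_comm]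

lemma le_add_div_mul_of_le_add_mul {x a b f₀ F : ℝ} (ha : 0 ≤ a) (hf₀ : 0 < f₀) (hF : f₀ ≤ F)
    (hx : x ≤ a + b * F) : x ≤ (b + a / f₀) * F := by
  have : a ≤ a / f₀ * F := by
    calc a = a / f₀ * f₀ := (div_mul_cancel₀ a hf₀.ne').symm
      _ ≤ a / f₀ * F := by gcongr
  linarith

lemma log_two_mul_log_two_pos : 0 < log (2 * log 2) :=
  log_pos <| by linarith [log_two_gt_d9]

/-- The logarithmic factor at the largest possible round `(1 + c) · log₂ (Δₜ^ε)⁻¹`,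
written with `L = log (Δₜ^ε)⁻¹`. -/
lemma exists_log_le_mul_log_log_add_log_add_log (c : ℝ) (hc : 0 ≤ c) :
    ∃ C : ℝ, 0 < C ∧ ∀ (n : ℕ) (L δ : ℝ), 2 ≤ n → log 2 ≤ L → 0 < δ → δ ≤ 1 →
      log (2 * n * ((1 + c) * (L / log 2)) ^ 2 / δ) ≤ C * (log L + log n + log δ⁻¹) := by
  set K := log ((1 + c) / log 2)
  have hK : 0 ≤ K := log_nonneg <| (one_le_div (log_pos one_lt_two)).mpr <| by
    linarith [log_two_lt_d9]
  refine ⟨2 + (log 2 + 2 * K) / log (2 * log 2),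
    by have := log_two_mul_log_two_pos; positivity, ?_⟩
  intro n L δ hn hL hδ hδ1
  have hl2 : 0 < log 2 := log_pos one_lt_two
  have hn : (2 : ℝ) ≤ n := by exact_mod_cast hn
  have hlogn : log 2 ≤ log n := log_le_log two_pos hn
  have hlogδ : 0 ≤ log δ⁻¹ := log_nonneg (one_le_inv₀ hδ |>.mpr hδ1)
  have hlogL : log (log 2) ≤ log L := log_le_log hl2 hL
  have hL : 0 < L := hl2.trans_le hL
  have hc : 0 < 1 + c := by linarith
  have hsplit : log (2 * n * ((1 + c) * (L / log 2)) ^ 2 / δ) =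
      log 2 + log n + log δ⁻¹ + 2 * (K + log L) := by
    rw [show (1 + c) * (L / log 2) = (1 + c) / log 2 * L by ring, div_eq_mul_inv,
      log_mul (by positivity) (by positivity), log_mul (by positivity) (by positivity),
      log_mul (by positivity) (by positivity),
      log_pow, log_mul (div_pos hc hl2).ne' hL.ne']
    push_cast
    ring
  apply le_add_div_mul_of_le_add_mul (by positivity) log_two_mul_log_two_pos
  · rw [log_mul two_ne_zero hl2.ne']
    linarith
  · rw [hsplit]
    linarith

lemma sq_min_inv_le {a b : ℝ} (ha : 0 < a) (hb : 0 < b) :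
    min a⁻¹ b⁻¹ ^ 2 ≤ min (a ^ 2)⁻¹ (b ^ 2)⁻¹ := by
  have hm : 0 ≤ min a⁻¹ b⁻¹ := le_min (inv_nonneg.mpr ha.le) (inv_nonneg.mpr hb.le)
  rw [← inv_pow, ← inv_pow]
  exact le_min (by gcongr; exact min_le_left _ _) (by gcongr; exact min_le_right _ _)

lemma sum_two_pow_two_mul_mul_log_le_min {n : ℕ} {δ a b c x : ℝ} {R : ℕ} (hn : 1 ≤ n)
    (hδ : 0 < δ) (hδ1 : δ ≤ 1) (ha : 0 < a) (hb : 0 < b) (hx : 1 ≤ x)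
    (hR : (R : ℝ) ≤ logb 2 (min a⁻¹ b⁻¹) + c) (hRx : (R : ℝ) ≤ x) :
    ∑ j ∈ Icc 1 R, (2 : ℝ) ^ (2 * j) * log (2 * n * j ^ 2 / δ) ≤
      4 / 3 * 4 ^ c * log (2 * n * x ^ 2 / δ) * min (a ^ 2)⁻¹ (b ^ 2)⁻¹ := by
  have := log_nonneg (one_le_two_mul_mul_sq_div hn hδ hδ1 hx)
  calc _ ≤ 4 / 3 * 4 ^ R * log (2 * n * x ^ 2 / δ) :=
        sum_two_pow_two_mul_mul_log_le hn hδ hδ1 hx R hRx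
    _ ≤ 4 / 3 * (4 ^ c * min a⁻¹ b⁻¹ ^ 2) * log (2 * n * x ^ 2 / δ) := by
        gcongr
        exact four_pow_le_of_le_logb_add (lt_min (inv_pos.mpr ha) (inv_pos.mpr hb)) hR
    _ ≤ 4 / 3 * (4 ^ c * min (a ^ 2)⁻¹ (b ^ 2)⁻¹) * log (2 * n * x ^ 2 / δ) := by
        gcongr
        exact sq_min_inv_le ha hb
    _ = _ := by ring

lemma le_one_add_mul_of_le_add {r m ℓ c : ℝ} (hc : 0 ≤ c) (hℓ : 1 ≤ ℓ) (hm : m ≤ ℓ)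
    (hr : r ≤ m + c) : r ≤ (1 + c) * ℓ := by
  nlinarith

theorem adaptiveTopK_sample_complexity_general
    (c₀ : ℝ) :
    ∃ C : ℝ, 0 < C ∧
      ∀ (n : ℕ) (_ : 2 ≤ n) (Δ : Fin n → ℝ) (Dte δ : ℝ) (r : Fin n → ℕ),
        (∀ i, 0 < Δ i) → 0 < Dte → Dte ≤ 1 / 2 → 0 < δ → δ < 1 →
        (∀ i, (r i : ℝ) ≤ Real.logb 2 (min (Δ i)⁻¹ Dte⁻¹) + c₀) →
        ∑ i : Fin n, ∑ j ∈ Icc 1 (r i),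
            (2 : ℝ) ^ (2 * j) * Real.log (2 * n * j ^ 2 / δ) ≤
          C * (Real.log (Real.log Dte⁻¹) + Real.log n + Real.log δ⁻¹) *
            ∑ i : Fin n, min ((Δ i) ^ (2 : ℕ))⁻¹ (Dte ^ (2 : ℕ))⁻¹ := by
  set c := max c₀ 0
  obtain ⟨C, hC, hlog⟩ := exists_log_le_mul_log_log_add_log_add_log c (le_max_right _ _)
  refine ⟨4 / 3 * 4 ^ c * C, by positivity, ?_⟩
  intro n hn Δ Dte δ r hΔ hDte hDte2 hδ hδ1 hr
  have h2D : 2 ≤ Dte⁻¹ := by simpa using inv_anti₀ hDte hDte2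
  have hℓ : 1 ≤ logb 2 Dte⁻¹ := by simpa using logb_le_logb_of_le one_lt_two two_pos h2D
  set x := (1 + c) * logb 2 Dte⁻¹
  have hx : 1 ≤ x := one_le_mul_of_one_le_of_one_le (by simp [c]) hℓ
  have hr' (i : Fin n) : (r i : ℝ) ≤ logb 2 (min (Δ i)⁻¹ Dte⁻¹) + c :=
    (hr i).trans (by gcongr; exact le_max_left _ _)
  have hrx (i : Fin n) : (r i : ℝ) ≤ x :=
    le_one_add_mul_of_le_add (le_max_right _ _) hℓ (logb_le_logb_of_le one_lt_two
      (lt_min (inv_pos.mpr (hΔ i)) (inv_pos.mpr hDte)) (min_le_right _ _)) (hr' i)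
  calc _ ≤ ∑ i : Fin n, 4 / 3 * 4 ^ c * log (2 * n * x ^ 2 / δ) * min ((Δ i) ^ 2)⁻¹ (Dte ^ 2)⁻¹ :=
        sum_le_sum fun i _ => sum_two_pow_two_mul_mul_log_le_min (by omega) hδ hδ1.le (hΔ i)
          hDte hx (hr' i) (hrx i)
    _ ≤ _ := by
        rw [← mul_sum, mul_assoc (4 / 3 * 4 ^ c) C]
        gcongr
        exact hlog n (log Dte⁻¹) δ hn (log_le_log two_pos h2D) hδ hδ1.le

/-- Total sample complexity of AdaptiveTopK: if arm `i` is pulled at most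
`∑_{j=1}^{rᵢ} 2^{2j} ln(2nj²/δ)` times with
`rᵢ ≤ log₂ min{Δᵢ⁻¹, (Δₜ^ε)⁻¹} + O(1)`, the total number of pulls is
`O((log log (Δₜ^ε)⁻¹ + log n + log δ⁻¹) · ∑ᵢ min{Δᵢ⁻², (Δₜ^ε)⁻²})`. -/
theorem adaptiveTopK_sample_complexity
    (c₀ : ℝ) (hc₀ : 0 ≤ c₀) :
    ∃ C : ℝ, 0 < C ∧
      ∀ (n : ℕ) (_ : 2 ≤ n) (Δ : Fin n → ℝ) (Dte δ : ℝ) (r : Fin n → ℕ),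
        (∀ i, 0 < Δ i) → 0 < Dte → Dte ≤ 1 / 2 → 0 < δ → δ < 1 →
        (∀ i, (r i : ℝ) ≤ Real.logb 2 (min (Δ i)⁻¹ Dte⁻¹) + c₀) →
        ∑ i : Fin n, ∑ j ∈ Icc 1 (r i),
            (2 : ℝ) ^ (2 * j) * Real.log (2 * n * j ^ 2 / δ) ≤
          C * (Real.log (Real.log Dte⁻¹) + Real.log n + Real.log δ⁻¹) *
            ∑ i : Fin n, min ((Δ i) ^ (2 : ℕ))⁻¹ (Dte ^ (2 : ℕ))⁻¹ :=
  adaptiveTopK_sample_complexity_general c₀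
end
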